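/- Let X, Y, Z, W be subsets of Fin m with |X| ≠ |Y|, |X| < m and |Y| < m, let A = Δ_X^c, B = Δ_Y^c, C = Δ_Z, E = Δ_W, and set c = |Z|+|W|. Then: the number of messages t ∈ (Fin m → 𝔽₂)⁴ with w(t) = 0 equals 2^{2m−c}; the number of t with 2·w(t) = (2^m − 2^{|X|})·2^{m+c} equals (2^{m−|Y|} − 1)·2^{2m−c}; the number of t with 2·w(t) = (2^m − 2^{|Y|})·2^{m+c} equals (2^{m−|X|} − 1)·2^{2m−c}; the number of t with 2·w(t) = (2^m − 2^{|X|} − 2^{|Y|})·2^{m+c} equals (2^{2m−|X|−|Y|} − 2^{m−|X|} − 2^{m−|Y|} + 1)·2^{2m−c}; and the number of t with 2·w(t) = (2^m − 2^{|X|})(2^m − 2^{|Y|})·2^c equals (2^{2m+c} − 2^{2m−|X|−|Y|})·2^{2m−c}. (Hence C_D^{(2)} is a four-weight binary linear code of length (2^m−2^{|X|})(2^m−2^{|Y|})2^c, dimension 2m+c and minimum distance (2^m−2^{|X|}−2^{|Y|})2^{m+c−1}.) -/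

import Mathlib

open Finset

/-- Euclidean dot product of vectors over `𝔽₂`. -/
def dotp {m : ℕ} (x y : Fin m → ZMod 2) : ZMod 2 := ∑ i, x i * y i

/-- Support of a vector over `𝔽₂`. -/
def supp {m : ℕ} (v : Fin m → ZMod 2) : Finset (Fin m) :=
  Finset.univ.filter fun i => v i ≠ 0

/-- The simplicial complex `Δ_S` generated by `S ⊆ [m]`. -/
def delta {m : ℕ} (S : Finset (Fin m)) : Finset (Fin m → ZMod 2) :=
  Finset.univ.filter fun u => supp u ⊆ S

/-- The complement `Δ_S^c` of the simplicial complex generated by `S`. -/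
def deltac {m : ℕ} (S : Finset (Fin m)) : Finset (Fin m → ZMod 2) :=
  Finset.univ \ delta S

/-- A message `(x₁, x₂, x₃, x₄)` consisting of four vectors over `𝔽₂`. -/
abbrev Msg (m : ℕ) :=
  (Fin m → ZMod 2) × (Fin m → ZMod 2) × (Fin m → ZMod 2) × (Fin m → ZMod 2)

/-- The value of the codeword of the subfield code `C_D^{(2)}` associated to the
message `t = (x₁,x₂,x₃,x₄)` at the position `p = (a,b,c,e)`:
`(x₁+x₄)·a + x₃·b + x₂·c + x₁·e`. -/
def cword {m : ℕ} (t p : Msg m) : ZMod 2 :=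
  dotp (t.1 + t.2.2.2) p.1 + dotp t.2.2.1 p.2.1 + dotp t.2.1 p.2.2.1 +
    dotp t.1 p.2.2.2

/-- Hamming weight of the codeword associated to the message `t`, for the code
with defining positions `A × B × C × E`. -/
def cw {m : ℕ} (A B C E : Finset (Fin m → ZMod 2)) (t : Msg m) : ℕ :=
  ((A ×ˢ B ×ˢ C ×ˢ E).filter fun p => cword t p = 1).card

/-!
Let `u = (x₁ + x₄, x₃, x₂, x₁)` be the coefficient vectors of the codeword of `t` on the four
blocks of positions; `t ↦ u` is a bijection. With `χ(x) = (-1)^x`, twice the weight of the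
codeword is the length `|A||B||C||E|` minus the product of the four character sums
`∑_a χ(u_j · a)`. Over `Δ_S` such a sum is `2^|S|` if `u_j` vanishes on `S` and `0` otherwise;
over `Δ_S^c` it is `2^m [u_j = 0]` minus that. Hence the weight only depends on whether
`u₁, u₂, u₃, u₄` vanish on `X, Y, Z, W` and, if so, on whether `u₁` and `u₂` are zero. Since
`|X| ≠ |Y|` the five resulting weights are distinct, and each class is a product of sets of
vectors vanishing on a given set.
-/

def chi (x : ZMod 2) : ℤ := if x = 0 then 1 else -1

lemma chi_add (x y : ZMod 2) : chi (x + y) = chi x * chi y := by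
  revert x y; decide

lemma chi_sum {ι : Type*} (s : Finset ι) (f : ι → ZMod 2) :
    chi (∑ i ∈ s, f i) = ∏ i ∈ s, chi (f i) := by
  induction s using Finset.cons_induction with
  | empty => rfl
  | cons a s ha ih => rw [sum_cons, prod_cons, chi_add, ih]

lemma sum_chi_mul (c : ZMod 2) : ∑ x, chi (c * x) = if c = 0 then 2 else 0 := by
  revert c; decide

lemma two_mul_card_filter_eq_one {α : Type*} (s : Finset α) (f : α → ZMod 2) :
    2 * (#{a ∈ s | f a = 1} : ℤ) = #s - ∑ a ∈ s, chi (f a) := by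
  have hchi (x : ZMod 2) : chi x = 1 - 2 * if x = 1 then 1 else 0 := by revert x; decide
  simp only [hchi, sum_sub_distrib, ← mul_sum, natCast_card_filter, sum_const, nsmul_eq_mul,
    mul_one]
  ring

lemma sum_chi_add_product {α β γ δ : Type*} (A : Finset α) (B : Finset β) (C : Finset γ)
    (E : Finset δ) (f : α → ZMod 2) (g : β → ZMod 2) (h : γ → ZMod 2) (k : δ → ZMod 2) :
    ∑ p ∈ A ×ˢ B ×ˢ C ×ˢ E, chi (f p.1 + g p.2.1 + h p.2.2.1 + k p.2.2.2) =
      (∑ a ∈ A, chi (f a)) * (∑ b ∈ B, chi (g b)) * (∑ c ∈ C, chi (h c)) *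
        ∑ e ∈ E, chi (k e) := by
  simp only [sum_product, chi_add, ← mul_sum, ← sum_mul]

lemma two_pow_add_two_pow_le {m x y : ℕ} (hx : x < m) (hy : y < m) :
    2 ^ x + 2 ^ y ≤ 2 ^ m := by
  have hx' : 2 ^ x ≤ 2 ^ (m - 1) := Nat.pow_le_pow_right two_pos (by omega)
  have hy' : 2 ^ y ≤ 2 ^ (m - 1) := Nat.pow_le_pow_right two_pos (by omega)
  have hm : 2 ^ m = 2 * 2 ^ (m - 1) := by rw [← pow_succ']; congr 1; omega
  omega

lemma two_pow_add_two_pow_lt {m x y : ℕ} (hxy : x ≠ y) (hx : x < m) (hy : y < m) :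
    2 ^ x + 2 ^ y < 2 ^ m := by
  wlog h : x < y generalizing x y
  · rw [add_comm]; exact this hxy.symm hy hx (by omega)
  have h1 : 2 ^ x < 2 ^ y := Nat.pow_lt_pow_right one_lt_two h
  have h2 : 2 ^ y ≤ 2 ^ (m - 1) := Nat.pow_le_pow_right two_pos (by omega)
  have hm : 2 ^ m = 2 * 2 ^ (m - 1) := by rw [← pow_succ']; congr 1; omega
  omega

lemma sub_one_mul_sub_one_of_two_le {a b : ℕ} (ha : 2 ≤ a) (hb : 2 ≤ b) :
    (a - 1) * (b - 1) = a * b - a - b + 1 := by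
  have hab : a + b ≤ a * b := by nlinarith
  zify [(by omega : 1 ≤ a), (by omega : 1 ≤ b), (by omega : a ≤ a * b),
    (by omega : b ≤ a * b - a)]
  ring

def twiceWeight (m x y c : ℕ) : Option (Bool × Bool) → ℕ
  | none => (2 ^ m - 2 ^ x) * (2 ^ m - 2 ^ y) * 2 ^ c
  | some (true, true) => 0
  | some (true, false) => (2 ^ m - 2 ^ x) * 2 ^ (m + c)
  | some (false, true) => (2 ^ m - 2 ^ y) * 2 ^ (m + c)
  | some (false, false) => (2 ^ m - 2 ^ x - 2 ^ y) * 2 ^ (m + c)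

/-- With `M = 2^m`, `A = 2^x`, `B = 2^y`, the values are `0 < (M - A - B) M < (M - A)(M - B)`,
which is below both `(M - A) M` and `(M - B) M`, all times `2^c`; these last two differ as
`A ≠ B`. Writing `M = A + B + (a + 1)` removes the truncated subtractions. -/
lemma twiceWeight_injective {m x y c : ℕ} (hxy : x ≠ y) (hx : x < m) (hy : y < m) :
    Function.Injective (twiceWeight m x y c) := by
  obtain ⟨a, ha⟩ : ∃ a, 2 ^ m = 2 ^ x + 2 ^ y + (a + 1) :=
    ⟨2 ^ m - (2 ^ x + 2 ^ y) - 1, by have := two_pow_add_two_pow_lt hxy hx hy; omega⟩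
  have hne : 2 ^ x ≠ 2 ^ y := fun h => hxy (Nat.pow_right_injective le_rfl h)
  have hA : 2 ^ x ≠ 0 := by positivity
  have hB : 2 ^ y ≠ 0 := by positivity
  have hABC : 0 < 2 ^ x * 2 ^ y * 2 ^ c := by positivity
  rintro (_ | ⟨_ | _, _ | _⟩) (_ | ⟨_ | _, _ | _⟩) h <;>
    simp only [twiceWeight, pow_add, ha] at h <;> first | rfl | skip
  all_goals
    generalize 2 ^ x = A at *
    generalize 2 ^ y = B at *
    simp only [add_tsub_cancel_left, show A + B + (a + 1) - A = B + (a + 1) by omega,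
      show A + B + (a + 1) - B = A + (a + 1) by omega] at h
    first
    | simp [hne, hne.symm, hA, hB] at h
    | nlinarith

section Code

variable {m : ℕ}

lemma mem_delta {S : Finset (Fin m)} {u : Fin m → ZMod 2} : u ∈ delta S ↔ ∀ i ∉ S, u i = 0 := by
  simp [delta, supp, Finset.subset_iff, not_imp_comm]

lemma mem_delta_compl {S : Finset (Fin m)} {u : Fin m → ZMod 2} :
    u ∈ delta Sᶜ ↔ ∀ i ∈ S, u i = 0 := by
  simp [mem_delta]

lemma zero_mem_delta (S : Finset (Fin m)) : 0 ∈ delta S := by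
  simp [mem_delta]

lemma delta_univ : delta (univ : Finset (Fin m)) = univ := by
  ext u; simp [mem_delta]

lemma delta_eq_piFinset (S : Finset (Fin m)) :
    delta S = Fintype.piFinset fun i => if i ∈ S then univ else {0} := by
  ext u
  simp only [mem_delta, Fintype.mem_piFinset]
  refine forall_congr' fun i => ?_
  split_ifs with hi <;> simp [hi]

lemma card_delta (S : Finset (Fin m)) : #(delta S) = 2 ^ #S := by
  simp only [delta_eq_piFinset, Fintype.card_piFinset, apply_ite Finset.card, card_univ,
    ZMod.card, card_singleton]
  rw [prod_ite_mem, univ_inter, prod_const]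

lemma card_delta_compl (S : Finset (Fin m)) : #(delta Sᶜ) = 2 ^ (m - #S) := by
  rw [card_delta, card_compl, Fintype.card_fin]

lemma card_deltac (S : Finset (Fin m)) : #(deltac S) = 2 ^ m - 2 ^ #S := by
  rw [deltac, card_sdiff_of_subset (subset_univ _), card_delta, card_univ, Fintype.card_fun,
    ZMod.card, Fintype.card_fin]

lemma card_delta_compl_filter_decide_eq_zero (S : Finset (Fin m)) (b : Bool) :
    #{v ∈ delta Sᶜ | decide (v = 0) = b} = if b then 1 else 2 ^ (m - #S) - 1 := by
  cases b
  · simp [filter_ne', zero_mem_delta, card_delta_compl]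
  · simp [filter_eq', zero_mem_delta]

lemma sum_chi_dotp_delta (S : Finset (Fin m)) (u : Fin m → ZMod 2) :
    ∑ a ∈ delta S, chi (dotp u a) = if u ∈ delta Sᶜ then 2 ^ #S else 0 := by
  simp only [dotp, chi_sum]
  rw [delta_eq_piFinset S, ← prod_univ_sum _ fun i x => chi (u i * x)]
  have hfactor (i : Fin m) : ∑ x ∈ (if i ∈ S then univ else {0}), chi (u i * x) =
      if i ∈ S then (if u i = 0 then 2 else 0) else 1 := by
    split_ifs <;> simp_all [sum_chi_mul] <;> rfl
  rw [Fintype.prod_congr _ _ hfactor, prod_ite_mem, univ_inter, prod_ite_zero, prod_const]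
  simp [mem_delta_compl]

lemma sum_chi_dotp_deltac (S : Finset (Fin m)) (u : Fin m → ZMod 2) :
    ∑ a ∈ deltac S, chi (dotp u a) =
      if u = 0 then 2 ^ m - 2 ^ #S else if u ∈ delta Sᶜ then -2 ^ #S else 0 := by
  have hsplit := sum_sdiff (f := fun a => chi (dotp u a)) (subset_univ (delta S))
  have huniv := sum_chi_dotp_delta univ u
  rw [delta_univ, compl_univ, card_univ, Fintype.card_fin] at huniv
  have hempty : u ∈ delta ∅ ↔ u = 0 := by simp [mem_delta, funext_iff]
  rw [deltac, eq_sub_of_add_eq hsplit, huniv, sum_chi_dotp_delta]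
  simp only [hempty]
  split_ifs <;> simp_all [mem_delta_compl]

/-- `cword t` is the linear form with coefficient vectors `blockCoeffs t` on the four blocks. -/
def blockCoeffs : Msg m ≃ Msg m where
  toFun t := (t.1 + t.2.2.2, t.2.2.1, t.2.1, t.1)
  invFun u := (u.2.2.2, u.2.2.1, u.2.1, u.1 + u.2.2.2)
  left_inv t := by ext <;> simp [add_comm t.1, add_assoc, CharTwo.add_self_eq_zero]
  right_inv u := by ext <;> simp [add_comm (u.2.2.2 _), add_assoc, CharTwo.add_self_eq_zero]

lemma two_mul_cw_eq_card_sub_prod (A B C E : Finset (Fin m → ZMod 2)) (t : Msg m) :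
    (2 * cw A B C E t : ℤ) = #A * #B * #C * #E -
      (∑ a ∈ A, chi (dotp (blockCoeffs t).1 a)) * (∑ b ∈ B, chi (dotp (blockCoeffs t).2.1 b)) *
        (∑ c ∈ C, chi (dotp (blockCoeffs t).2.2.1 c)) *
          ∑ e ∈ E, chi (dotp (blockCoeffs t).2.2.2 e) := by
  rw [cw, two_mul_card_filter_eq_one, ← sum_chi_add_product]
  simp only [card_product, Nat.cast_mul, mul_assoc]
  rfl

/-- `none` when some `u_j` does not vanish on its set, so that the product of character sums is
`0`; otherwise whether `u₁` and `u₂` are zero. -/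
def weightClass (X Y Z W : Finset (Fin m)) (u : Msg m) : Option (Bool × Bool) :=
  if u ∈ delta Xᶜ ×ˢ delta Yᶜ ×ˢ delta Zᶜ ×ˢ delta Wᶜ then some (u.1 = 0, u.2.1 = 0) else none

lemma card_weightClass_eq_some (X Y Z W : Finset (Fin m)) (b₁ b₂ : Bool) :
    #{u | weightClass X Y Z W u = some (b₁, b₂)} =
      #{v ∈ delta Xᶜ | decide (v = 0) = b₁} * #{v ∈ delta Yᶜ | decide (v = 0) = b₂} *
        2 ^ (m - #Z) * 2 ^ (m - #W) := by
  have hfib : ({u | weightClass X Y Z W u = some (b₁, b₂)} : Finset (Msg m)) =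
      {v ∈ delta Xᶜ | decide (v = 0) = b₁} ×ˢ {v ∈ delta Yᶜ | decide (v = 0) = b₂} ×ˢ
        delta Zᶜ ×ˢ delta Wᶜ := by
    ext u
    simp only [weightClass, mem_filter, mem_univ, true_and, mem_product]
    split_ifs with h <;> simp_all
  rw [hfib, card_product, card_product, card_product, card_delta_compl, card_delta_compl,
    mul_assoc, mul_assoc]

lemma card_weightClass_eq_none (X Y Z W : Finset (Fin m)) :
    #{u | weightClass X Y Z W u = none} =
      2 ^ (4 * m) - 2 ^ (m - #X) * 2 ^ (m - #Y) * 2 ^ (m - #Z) * 2 ^ (m - #W) := by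
  have hfib : ({u | weightClass X Y Z W u = none} : Finset (Msg m)) =
      univ \ delta Xᶜ ×ˢ delta Yᶜ ×ˢ delta Zᶜ ×ˢ delta Wᶜ := by
    ext u
    simp [weightClass]
  rw [hfib, card_univ_sdiff]
  simp only [card_product, card_delta_compl, Fintype.card_prod, Fintype.card_fun, ZMod.card,
    Fintype.card_fin]
  ring_nf

variable {X Y : Finset (Fin m)} (Z W : Finset (Fin m))

lemma two_mul_cw_eq_twiceWeight (hX : #X < m) (hY : #Y < m) (t : Msg m) :
    2 * cw (deltac X) (deltac Y) (delta Z) (delta W) t =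
      twiceWeight m #X #Y (#Z + #W) (weightClass X Y Z W (blockCoeffs t)) := by
  have hXY := two_pow_add_two_pow_le hX hY
  have hXle : 2 ^ #X ≤ 2 ^ m := Nat.pow_le_pow_right two_pos hX.le
  have hYle : 2 ^ #Y ≤ 2 ^ m := Nat.pow_le_pow_right two_pos hY.le
  have hsum := two_mul_cw_eq_card_sub_prod (deltac X) (deltac Y) (delta Z) (delta W) t
  rw [sum_chi_dotp_deltac, sum_chi_dotp_deltac, sum_chi_dotp_delta, sum_chi_dotp_delta,
    card_deltac, card_deltac, card_delta, card_delta, Nat.cast_sub hXle,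
    Nat.cast_sub hYle] at hsum
  generalize blockCoeffs t = u at hsum ⊢
  zify
  rw [hsum, weightClass]
  by_cases hmem : u ∈ delta Xᶜ ×ˢ delta Yᶜ ×ˢ delta Zᶜ ×ˢ delta Wᶜ
  · obtain ⟨h1, h2, h3, h4⟩ := by simpa only [mem_product] using hmem
    rw [if_pos hmem, if_pos h1, if_pos h2, if_pos h3, if_pos h4]
    by_cases hu1 : u.1 = 0 <;> by_cases hu2 : u.2.1 = 0 <;>
      simp only [hu1, hu2, if_true, if_false, decide_true, decide_false, twiceWeight] <;>
      push_cast [Nat.sub_sub, Nat.cast_sub hXY, Nat.cast_sub hXle, Nat.cast_sub hYle,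
        pow_add] <;>
      ring
  · rw [if_neg hmem, twiceWeight]
    push_cast [Nat.cast_sub hXle, Nat.cast_sub hYle, pow_add]
    simp only [mem_product, not_and_or] at hmem
    rcases hmem with h | h | h | h
    · simp [h, (ne_of_mem_of_not_mem (zero_mem_delta _) h).symm, mul_assoc]
    · simp [h, (ne_of_mem_of_not_mem (zero_mem_delta _) h).symm, mul_assoc]
    · simp [h, mul_assoc]
    · simp [h, mul_assoc]

lemma card_filter_two_mul_cw_eq_twiceWeight (hXY : #X ≠ #Y) (hX : #X < m) (hY : #Y < m)
    (k : Option (Bool × Bool)) :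
    #{t | 2 * cw (deltac X) (deltac Y) (delta Z) (delta W) t =
        twiceWeight m #X #Y (#Z + #W) k} = #{u | weightClass X Y Z W u = k} :=
  card_equiv blockCoeffs fun t => by
    simp [two_mul_cw_eq_twiceWeight Z W hX hY, (twiceWeight_injective hXY hX hY).eq_iff]

lemma card_filter_two_mul_cw_eq_twiceWeight_some (hXY : #X ≠ #Y) (hX : #X < m) (hY : #Y < m)
    (b₁ b₂ : Bool) :
    #{t | 2 * cw (deltac X) (deltac Y) (delta Z) (delta W) t =
        twiceWeight m #X #Y (#Z + #W) (some (b₁, b₂))} =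
      (if b₁ then 1 else 2 ^ (m - #X) - 1) * (if b₂ then 1 else 2 ^ (m - #Y) - 1) *
        2 ^ (2 * m - (#Z + #W)) := by
  have hZ : #Z ≤ m := card_finset_fin_le Z
  have hW : #W ≤ m := card_finset_fin_le W
  rw [card_filter_two_mul_cw_eq_twiceWeight Z W hXY hX hY, card_weightClass_eq_some,
    card_delta_compl_filter_decide_eq_zero, card_delta_compl_filter_decide_eq_zero, mul_assoc,
    ← pow_add]
  congr 2
  omega

lemma card_filter_two_mul_cw_eq_twiceWeight_none (hXY : #X ≠ #Y) (hX : #X < m) (hY : #Y < m) :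
    #{t | 2 * cw (deltac X) (deltac Y) (delta Z) (delta W) t =
        twiceWeight m #X #Y (#Z + #W) none} =
      (2 ^ (2 * m + (#Z + #W)) - 2 ^ (2 * m - #X - #Y)) * 2 ^ (2 * m - (#Z + #W)) := by
  have hZ : #Z ≤ m := card_finset_fin_le Z
  have hW : #W ≤ m := card_finset_fin_le W
  rw [card_filter_two_mul_cw_eq_twiceWeight Z W hXY hX hY, card_weightClass_eq_none,
    Nat.sub_mul, ← pow_add, ← pow_add, ← pow_add, ← pow_add, ← pow_add]
  congr 2 <;> omega

end Code

theorem stmt7_general (m : ℕ) (X Y Z W : Finset (Fin m))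
    (hXY : X.card ≠ Y.card) (hXm : X.card < m) (hYm : Y.card < m) :
    ((Finset.univ.filter fun t : Msg m =>
        cw (deltac X) (deltac Y) (delta Z) (delta W) t = 0).card
      = 2 ^ (2 * m - (Z.card + W.card))) ∧
    ((Finset.univ.filter fun t : Msg m =>
        2 * cw (deltac X) (deltac Y) (delta Z) (delta W) t
          = (2 ^ m - 2 ^ X.card) * 2 ^ (m + (Z.card + W.card))).card
      = (2 ^ (m - Y.card) - 1) * 2 ^ (2 * m - (Z.card + W.card))) ∧
    ((Finset.univ.filter fun t : Msg m =>
        2 * cw (deltac X) (deltac Y) (delta Z) (delta W) t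
          = (2 ^ m - 2 ^ Y.card) * 2 ^ (m + (Z.card + W.card))).card
      = (2 ^ (m - X.card) - 1) * 2 ^ (2 * m - (Z.card + W.card))) ∧
    ((Finset.univ.filter fun t : Msg m =>
        2 * cw (deltac X) (deltac Y) (delta Z) (delta W) t
          = (2 ^ m - 2 ^ X.card - 2 ^ Y.card) * 2 ^ (m + (Z.card + W.card))).card
      = (2 ^ (2 * m - X.card - Y.card) - 2 ^ (m - X.card) - 2 ^ (m - Y.card) + 1) *
          2 ^ (2 * m - (Z.card + W.card))) ∧
    ((Finset.univ.filter fun t : Msg m =>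
        2 * cw (deltac X) (deltac Y) (delta Z) (delta W) t
          = (2 ^ m - 2 ^ X.card) * (2 ^ m - 2 ^ Y.card) * 2 ^ (Z.card + W.card)).card
      = (2 ^ (2 * m + (Z.card + W.card)) - 2 ^ (2 * m - X.card - Y.card)) *
          2 ^ (2 * m - (Z.card + W.card))) := by
  have hsome := card_filter_two_mul_cw_eq_twiceWeight_some Z W hXY hXm hYm
  refine ⟨?_, (hsome true false).trans (by simp), (hsome false true).trans (by simp), ?_,
    card_filter_two_mul_cw_eq_twiceWeight_none Z W hXY hXm hYm⟩
  · simpa [twiceWeight] using hsome true true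
  · refine (hsome false false).trans ?_
    rw [if_neg Bool.false_ne_true, if_neg Bool.false_ne_true,
      sub_one_mul_sub_one_of_two_le (Nat.le_self_pow (by omega) 2) (Nat.le_self_pow (by omega) 2),
      ← pow_add, show m - #X + (m - #Y) = 2 * m - #X - #Y by omega]

theorem stmt7 (m : ℕ) (hm : 0 < m) (X Y Z W : Finset (Fin m))
    (hXY : X.card ≠ Y.card) (hXm : X.card < m) (hYm : Y.card < m) :
    ((Finset.univ.filter fun t : Msg m =>
        cw (deltac X) (deltac Y) (delta Z) (delta W) t = 0).card
      = 2 ^ (2 * m - (Z.card + W.card))) ∧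
    ((Finset.univ.filter fun t : Msg m =>
        2 * cw (deltac X) (deltac Y) (delta Z) (delta W) t
          = (2 ^ m - 2 ^ X.card) * 2 ^ (m + (Z.card + W.card))).card
      = (2 ^ (m - Y.card) - 1) * 2 ^ (2 * m - (Z.card + W.card))) ∧
    ((Finset.univ.filter fun t : Msg m =>
        2 * cw (deltac X) (deltac Y) (delta Z) (delta W) t
          = (2 ^ m - 2 ^ Y.card) * 2 ^ (m + (Z.card + W.card))).card
      = (2 ^ (m - X.card) - 1) * 2 ^ (2 * m - (Z.card + W.card))) ∧
    ((Finset.univ.filter fun t : Msg m =>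
        2 * cw (deltac X) (deltac Y) (delta Z) (delta W) t
          = (2 ^ m - 2 ^ X.card - 2 ^ Y.card) * 2 ^ (m + (Z.card + W.card))).card
      = (2 ^ (2 * m - X.card - Y.card) - 2 ^ (m - X.card) - 2 ^ (m - Y.card) + 1) *
          2 ^ (2 * m - (Z.card + W.card))) ∧
    ((Finset.univ.filter fun t : Msg m =>
        2 * cw (deltac X) (deltac Y) (delta Z) (delta W) t
          = (2 ^ m - 2 ^ X.card) * (2 ^ m - 2 ^ Y.card) * 2 ^ (Z.card + W.card)).card
      = (2 ^ (2 * m + (Z.card + W.card)) - 2 ^ (2 * m - X.card - Y.card)) *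
          2 ^ (2 * m - (Z.card + W.card))) :=
  stmt7_general m X Y Z W hXY hXm hYm
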